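/- arXiv:1604.00506 — 3 statements merged into one kernel-verified Lean document; each statement's English description precedes it below -/
import Mathlib

section
/- Let (Ω, 𝒫) be a probability space, ψ₁,…,ψ_P : Ω → ℝ measurable, a > 0, and u⁽ˣ⁾, u⁽ʸ⁾, S ∈ ℝ^P. Define the P×P matrices J_x and J_y by [J_x]_{kj} = ∫_Ω (Σ_i u⁽ˣ⁾_i ψ_i) f'(Σ_{j'} S_{j'} ψ_{j'}) ψ_j ψ_k d𝒫 and [J_y]_{kj} = ∫_Ω (Σ_i u⁽ʸ⁾_i ψ_i) f'(Σ_{j'} S_{j'} ψ_{j'}) ψ_j ψ_k d𝒫, assuming all these integrands are integrable, where f'(s) = 2as(1−s)/(s² + a(1−s)²)². Then for all real constants c₁, c₂ the matrix c₁ J_x + c₂ J_y is symmetric, and consequently there exist an orthogonal matrix Q and a real diagonal matrix D with c₁ J_x + c₂ J_y = Q D Qᵀ; in particular all eigenvalues of c₁ J_x + c₂ J_y are real (the stochastic Galerkin formulation is hyperbolic for any order P). -/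
open MeasureTheory Matrix

theorem Matrix.isSymm_of_apply_eq_integral {Ω n : Type*} [MeasurableSpace Ω] (μ : Measure Ω)
    (g : Ω → ℝ) (ψ : n → Ω → ℝ) {J : Matrix n n ℝ}
    (hJ : ∀ k j, J k j = ∫ ω, g ω * ψ j ω * ψ k ω ∂μ) : J.IsSymm :=
  IsSymm.ext fun k j => by simp only [hJ, mul_right_comm]

section Spectral

variable {n : Type*} [Fintype n] [DecidableEq n]

theorem Matrix.IsSymm.exists_orthogonal_diagonalization {A : Matrix n n ℝ} (hA : A.IsSymm) :
    ∃ Q D : Matrix n n ℝ, Qᵀ * Q = 1 ∧ D.IsDiag ∧ A = Q * D * Qᵀ := by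
  have hH : A.IsHermitian := isHermitian_iff_isSymm.2 hA
  refine ⟨hH.eigenvectorUnitary, diagonal (RCLike.ofReal ∘ hH.eigenvalues),
    ?_, isDiag_diagonal _, ?_⟩
  · simpa [star_eq_conjTranspose] using mem_unitaryGroup_iff'.1 hH.eigenvectorUnitary.2
  · simpa [star_eq_conjTranspose] using hH.spectral_theorem

theorem Matrix.IsHermitian.im_eq_zero_of_hasEigenvalue {𝕜 : Type*} [RCLike 𝕜]
    {A : Matrix n n 𝕜} (hA : A.IsHermitian) {μ : 𝕜}
    (hμ : Module.End.HasEigenvalue A.mulVecLin μ) : RCLike.im μ = 0 := by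
  have hμA : μ ∈ spectrum 𝕜 A := by
    rw [← spectrum_toLin', toLin'_apply']
    exact Module.End.hasEigenvalue_iff_mem_spectrum.1 hμ
  obtain ⟨r, -, rfl⟩ := hA.spectrum_eq_image_range ▸ hμA
  exact RCLike.ofReal_im r

theorem Matrix.IsSymm.im_eq_zero_of_hasEigenvalue_map_ofReal {A : Matrix n n ℝ}
    (hA : A.IsSymm) {μ : ℂ}
    (hμ : Module.End.HasEigenvalue (A.map (fun x : ℝ => (x : ℂ))).mulVecLin μ) : μ.im = 0 :=
  ((isHermitian_iff_isSymm.2 hA).map _ fun x => (Complex.conj_ofReal x).symm)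
    |>.im_eq_zero_of_hasEigenvalue hμ

end Spectral

theorem stmt_1_general {Ω : Type*} [MeasurableSpace Ω] (Pr : Measure Ω)
    (P : ℕ) (ψ : Fin P → Ω → ℝ)
    (ux uy S : Fin P → ℝ)
    (f' : ℝ → ℝ)
    (Jx Jy : Matrix (Fin P) (Fin P) ℝ)
    (hJx : ∀ k j, Jx k j =
      ∫ ω, (∑ i, ux i * ψ i ω) * f' (∑ j', S j' * ψ j' ω) * ψ j ω * ψ k ω ∂Pr)
    (hJy : ∀ k j, Jy k j =
      ∫ ω, (∑ i, uy i * ψ i ω) * f' (∑ j', S j' * ψ j' ω) * ψ j ω * ψ k ω ∂Pr) :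
    ∀ c₁ c₂ : ℝ,
      (c₁ • Jx + c₂ • Jy).IsSymm ∧
      (∃ (Q D : Matrix (Fin P) (Fin P) ℝ), Qᵀ * Q = 1 ∧ D.IsDiag ∧
        c₁ • Jx + c₂ • Jy = Q * D * Qᵀ) ∧
      (∀ μ : ℂ, Module.End.HasEigenvalue
        (Matrix.mulVecLin ((c₁ • Jx + c₂ • Jy).map (fun x : ℝ => (x : ℂ)))) μ → μ.im = 0) := by
  intro c₁ c₂
  have hM : (c₁ • Jx + c₂ • Jy).IsSymm :=
    ((isSymm_of_apply_eq_integral Pr _ ψ hJx).smul c₁).add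
      ((isSymm_of_apply_eq_integral Pr _ ψ hJy).smul c₂)
  exact ⟨hM, hM.exists_orthogonal_diagonalization,
    fun _ => hM.im_eq_zero_of_hasEigenvalue_map_ofReal⟩

/-- Proposition 1: the stochastic Galerkin formulation of the two-dimensional
Buckley–Leverett problem is hyperbolic: every real linear combination of the
Jacobian matrices `Jx`, `Jy` is symmetric, hence orthogonally diagonalizable
with real eigenvalues. -/
theorem stmt_1 {Ω : Type*} [MeasurableSpace Ω] (Pr : Measure Ω) [IsProbabilityMeasure Pr]
    (P : ℕ) (ψ : Fin P → Ω → ℝ) (hψ : ∀ i, Measurable (ψ i))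
    (a : ℝ) (ha : 0 < a) (ux uy S : Fin P → ℝ)
    (f' : ℝ → ℝ)
    (hf' : ∀ s, f' s = 2 * a * s * (1 - s) / (s ^ 2 + a * (1 - s) ^ 2) ^ 2)
    (hintx : ∀ j k : Fin P, Integrable (fun ω =>
      (∑ i, ux i * ψ i ω) * f' (∑ j', S j' * ψ j' ω) * ψ j ω * ψ k ω) Pr)
    (hinty : ∀ j k : Fin P, Integrable (fun ω =>
      (∑ i, uy i * ψ i ω) * f' (∑ j', S j' * ψ j' ω) * ψ j ω * ψ k ω) Pr)
    (Jx Jy : Matrix (Fin P) (Fin P) ℝ)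
    (hJx : ∀ k j, Jx k j =
      ∫ ω, (∑ i, ux i * ψ i ω) * f' (∑ j', S j' * ψ j' ω) * ψ j ω * ψ k ω ∂Pr)
    (hJy : ∀ k j, Jy k j =
      ∫ ω, (∑ i, uy i * ψ i ω) * f' (∑ j', S j' * ψ j' ω) * ψ j ω * ψ k ω ∂Pr) :
    ∀ c₁ c₂ : ℝ,
      (c₁ • Jx + c₂ • Jy).IsSymm ∧
      (∃ (Q D : Matrix (Fin P) (Fin P) ℝ), Qᵀ * Q = 1 ∧ D.IsDiag ∧
        c₁ • Jx + c₂ • Jy = Q * D * Qᵀ) ∧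
      (∀ μ : ℂ, Module.End.HasEigenvalue
        (Matrix.mulVecLin ((c₁ • Jx + c₂ • Jy).map (fun x : ℝ => (x : ℂ)))) μ → μ.im = 0) :=
  stmt_1_general Pr P ψ ux uy S f' Jx Jy hJx hJy
end

section
/- Let (Ω, 𝒫) be a probability space and ψ₁,…,ψ_P : Ω → ℝ measurable with all quadruple products ψ_hψ_iψ_jψ_k integrable; define [B(a,b)]_{jk} = Σ_{h,i} (∫_Ω ψ_h ψ_i ψ_j ψ_k d𝒫) a_h b_i for a, b ∈ ℝ^P. Let a > 0 (viscosity ratio), S, u ∈ ℝ^P, and let e₁ ∈ ℝ^P be the first standard basis vector. Suppose the matrix M = B(S,S) + a·B(e₁ − S, e₁ − S) is positive definite. Set w = M⁻¹ B(S,S) u. Then the matrix 2 M⁻¹ [ B(a(e₁ − S) − S, w) + B(S, u) ] is diagonalizable over ℝ with real eigenvalues: there exist an invertible real matrix V and a real diagonal matrix D with 2 M⁻¹ [ B(a(e₁−S)−S, w) + B(S,u) ] = V D V⁻¹. -/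
/-! The Jacobian is `2 M⁻¹ A` with `M` positive definite and `A` symmetric, since every
`B(x, y)` is symmetric: its entries are the fourth moments `⟨ψ_h ψ_i ψ_j ψ_k⟩`, symmetric in
`j, k`. Writing `M = Yᴴ Y`, the product `M⁻¹ A` is similar via `Y` to the symmetric matrix
`(Y⁻¹)ᴴ A Y⁻¹`, which the spectral theorem diagonalizes with real eigenvalues. -/

open MeasureTheory Matrix
open scoped ComplexOrder

namespace Matrix

variable {n 𝕜 : Type*} [Fintype n] [DecidableEq n] [RCLike 𝕜]

theorem IsHermitian.exists_eq_mul_diagonal_mul_inv {A : Matrix n n 𝕜} (hA : A.IsHermitian) :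
    ∃ (V : Matrix n n 𝕜) (d : n → ℝ),
      IsUnit V.det ∧ A = V * diagonal (RCLike.ofReal ∘ d) * V⁻¹ := by
  let U : Matrix n n 𝕜 := hA.eigenvectorUnitary
  have hU : star U * U = 1 := Unitary.coe_star_mul_self _
  refine ⟨U, hA.eigenvalues, UnitaryGroup.det_isUnit hA.eigenvectorUnitary, ?_⟩
  rw [inv_eq_left_inv hU]
  exact hA.spectral_theorem

theorem PosDef.exists_inv_mul_eq_mul_diagonal_mul_inv {M A : Matrix n n 𝕜} (hM : M.PosDef)
    (hA : A.IsHermitian) :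
    ∃ (V : Matrix n n 𝕜) (d : n → ℝ),
      IsUnit V.det ∧ M⁻¹ * A = V * diagonal (RCLike.ofReal ∘ d) * V⁻¹ := by
  open scoped MatrixOrder in
  obtain ⟨Y, rfl⟩ := CStarAlgebra.nonneg_iff_eq_star_mul_self.mp hM.posSemidef.nonneg
  have hY : IsUnit Y.det := by
    have hdet := (isUnit_iff_isUnit_det _).mp hM.isUnit
    rw [det_mul] at hdet
    exact isUnit_of_mul_isUnit_right hdet
  obtain ⟨U, d, hU, hC⟩ :=
    (isHermitian_conjTranspose_mul_mul Y⁻¹ hA).exists_eq_mul_diagonal_mul_inv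
  refine ⟨Y⁻¹ * U, d, by simpa [det_mul] using (Y.isUnit_nonsing_inv_det hY).mul hU, ?_⟩
  have hconj : (star Y * Y)⁻¹ * A = Y⁻¹ * ((Y⁻¹)ᴴ * A * Y⁻¹) * Y := by
    rw [mul_inv_rev, star_eq_conjTranspose, conjTranspose_nonsing_inv, mul_assoc Y⁻¹ _ Y,
      mul_assoc _ Y⁻¹, nonsing_inv_mul Y hY, mul_one, mul_assoc]
  rw [hconj, hC, mul_inv_rev, nonsing_inv_nonsing_inv Y hY]
  simp only [mul_assoc]

end Matrix

noncomputable def quadMomentMatrix {Ω ι : Type*} [MeasurableSpace Ω] [Fintype ι] (μ : Measure Ω)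
    (ψ : ι → Ω → ℝ) (a b : ι → ℝ) : Matrix ι ι ℝ :=
  of fun j k => ∑ h, ∑ i, (∫ ω, ψ h ω * ψ i ω * ψ j ω * ψ k ω ∂μ) * a h * b i

theorem quadMomentMatrix_isHermitian {Ω ι : Type*} [MeasurableSpace Ω] [Fintype ι]
    (μ : Measure Ω) (ψ : ι → Ω → ℝ) (a b : ι → ℝ) : (quadMomentMatrix μ ψ a b).IsHermitian := by
  ext j k
  simp only [conjTranspose_apply, star_trivial, quadMomentMatrix, of_apply]
  simp_rw [mul_right_comm _ (ψ k _) (ψ j _)]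

theorem stmt_4_general {Ω : Type*} [MeasurableSpace Ω] (Pr : Measure Ω)
    (P : ℕ) (ψ : Fin P → Ω → ℝ)
    (B : (Fin P → ℝ) → (Fin P → ℝ) → Matrix (Fin P) (Fin P) ℝ)
    (hB : ∀ a b j k, B a b j k =
      ∑ h, ∑ i, (∫ ω, ψ h ω * ψ i ω * ψ j ω * ψ k ω ∂Pr) * a h * b i)
    (a : ℝ) (S u : Fin P → ℝ)
    (e₁ : Fin P → ℝ)
    (M : Matrix (Fin P) (Fin P) ℝ)
    (hMpd : M.PosDef)
    (w : Fin P → ℝ) :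
    ∃ (V D : Matrix (Fin P) (Fin P) ℝ),
      IsUnit V.det ∧ D.IsDiag ∧
        (2 : ℝ) • (M⁻¹ * (B (a • (e₁ - S) - S) w + B S u)) = V * D * V⁻¹ := by
  have hB_eq : B = quadMomentMatrix Pr ψ := by
    ext x y j k
    exact hB x y j k
  obtain ⟨V, d, hV, hdiag⟩ := hMpd.exists_inv_mul_eq_mul_diagonal_mul_inv
    (hB_eq ▸ (quadMomentMatrix_isHermitian Pr ψ _ _).add (quadMomentMatrix_isHermitian Pr ψ _ _))
  refine ⟨V, (2 : ℝ) • diagonal (RCLike.ofReal ∘ d), hV, (isDiag_diagonal _).smul _, ?_⟩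
  rw [hdiag, Matrix.mul_smul, Matrix.smul_mul]

/-- Proposition 2: hyperbolicity of the pseudo-spectral stochastic Galerkin
flux of the Buckley–Leverett problem.  If the system matrix
`M = B(S,S) + a • B(e₁ - S, e₁ - S)` is positive definite, then the flux
Jacobian `2 M⁻¹ (B(a•(e₁-S) - S, w) + B(S,u))` with `w = M⁻¹ B(S,S) u` is
diagonalizable over `ℝ` with real eigenvalues. -/
theorem stmt_4 {Ω : Type*} [MeasurableSpace Ω] (Pr : Measure Ω) [IsProbabilityMeasure Pr]
    (P : ℕ) (hP : 0 < P) (ψ : Fin P → Ω → ℝ) (hψ : ∀ i, Measurable (ψ i))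
    (hint : ∀ h i j k : Fin P,
      Integrable (fun ω => ψ h ω * ψ i ω * ψ j ω * ψ k ω) Pr)
    (B : (Fin P → ℝ) → (Fin P → ℝ) → Matrix (Fin P) (Fin P) ℝ)
    (hB : ∀ a b j k, B a b j k =
      ∑ h, ∑ i, (∫ ω, ψ h ω * ψ i ω * ψ j ω * ψ k ω ∂Pr) * a h * b i)
    (a : ℝ) (ha : 0 < a) (S u : Fin P → ℝ)
    (e₁ : Fin P → ℝ) (he₁ : e₁ = fun i : Fin P => if (i : ℕ) = 0 then (1 : ℝ) else 0)
    (M : Matrix (Fin P) (Fin P) ℝ)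
    (hM : M = B S S + a • B (e₁ - S) (e₁ - S))
    (hMpd : M.PosDef)
    (w : Fin P → ℝ) (hw : w = M⁻¹.mulVec ((B S S).mulVec u)) :
    ∃ (V D : Matrix (Fin P) (Fin P) ℝ),
      IsUnit V.det ∧ D.IsDiag ∧
        (2 : ℝ) • (M⁻¹ * (B (a • (e₁ - S) - S) w + B S u)) = V * D * V⁻¹ :=
  stmt_4_general Pr P ψ B hB a S u e₁ M hMpd w
end

section
/- Let (Ω, 𝒫) be a probability space and ψ₁,…,ψ_P : Ω → ℝ measurable with all quadruple products ψ_hψ_iψ_jψ_k integrable; define [B(a,b)]_{jk} = Σ_{h,i} (∫_Ω ψ_h ψ_i ψ_j ψ_k d𝒫) a_h b_i. Let a > 0, u ∈ ℝ^P, e₁ the first standard basis vector, and define F : ℝ^P → ℝ^P by F(S) = (B(S,S) + a·B(e₁−S, e₁−S))⁻¹ · B(S,S) · u. At any point S where M(S) = B(S,S) + a·B(e₁−S, e₁−S) is invertible, F is differentiable and its Jacobian matrix (the matrix of the Fréchet derivative) equals 2 M(S)⁻¹ [ B(a(e₁−S) − S, F(S)) + B(S, u) ]. -/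
open MeasureTheory Matrix

/-!
The moments `⟨ψ_h ψ_i ψ_j ψ_k⟩` are symmetric in `(h, i)`, so `B` is a symmetric bilinear map and
`S ↦ B(S,S)` has derivative `v ↦ 2 B(S,v)`; hence `M` has derivative `v ↦ -2 B(w,v)` with
`w = a (e₁ - S) - S`. Differentiating `M(S) F(S) = B(S,S) u` gives
`F'(S) v = M(S)⁻¹ (2 B(S,v) u + 2 B(w,v) F(S))`, and the symmetry of the moments in `(i, k)`,
i.e. `B(x,y) z = B(x,z) y`, turns this into `2 M(S)⁻¹ (B(w,F(S)) + B(S,u)) v`.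
-/

-- Any norm on matrices would do; this one makes them a normed algebra, as inversion needs. Its
-- topology is the product topology only up to unfolding, so `simp` cannot evaluate derivatives
-- valued in matrices and the `change`s below do it instead.
attribute [local instance] Matrix.linftyOpNormedAddCommGroup Matrix.linftyOpNormedSpace
  Matrix.linftyOpNormedRing Matrix.linftyOpNormedAlgebra

section Calculus

variable {𝕜 : Type*} [NontriviallyNormedField 𝕜] {E : Type*} [NormedAddCommGroup E]
  [NormedSpace 𝕜 E]

theorem HasFDerivAt.bilinear_diag {F G : Type*} [NormedAddCommGroup F] [NormedSpace 𝕜 F]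
    [NormedAddCommGroup G] [NormedSpace 𝕜 G] (L : F →L[𝕜] F →L[𝕜] G)
    (hL : ∀ x y, L x y = L y x) {f : E → F} {f' : E →L[𝕜] F} {x : E}
    (hf : HasFDerivAt f f' x) :
    HasFDerivAt (fun y => L (f y) (f y)) ((2 : 𝕜) • (L (f x)).comp f') x := by
  refine (L.hasFDerivAt_of_bilinear hf hf).congr_fderiv ?_
  ext1 v
  simp [hL (f' v), two_smul]

variable [CompleteSpace 𝕜] {m n : Type*} [Fintype m] [Fintype n]

variable (𝕜 m n) in
def Matrix.mulVecL : Matrix m n 𝕜 →L[𝕜] (n → 𝕜) →L[𝕜] m → 𝕜 :=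
  (mulVecBilin 𝕜 𝕜).toContinuousBilinearMap

variable [DecidableEq n]

theorem Matrix.hasFDerivAt_inv {A : Matrix n n 𝕜} (hA : IsUnit A.det) :
    HasFDerivAt (fun B : Matrix n n 𝕜 => B⁻¹)
      (-ContinuousLinearMap.mulLeftRight 𝕜 _ A⁻¹ A⁻¹) A := by
  have : @CompleteSpace (Matrix n n 𝕜) PseudoMetricSpace.toUniformSpace :=
    FiniteDimensional.complete 𝕜 _
  obtain ⟨U, rfl⟩ := (isUnit_iff_isUnit_det _).2 hA
  simp only [nonsing_inv_eq_ringInverse, Ring.inverse_unit]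
  exact hasFDerivAt_ringInverse U

theorem HasFDerivAt.matrix_inv_mulVec {A : E → Matrix n n 𝕜} {A' : E →L[𝕜] Matrix n n 𝕜}
    {b : E → n → 𝕜} {b' : E →L[𝕜] n → 𝕜} {x : E} {D : E →L[𝕜] n → 𝕜}
    (hA : HasFDerivAt A A' x) (hb : HasFDerivAt b b' x) (hx : IsUnit (A x).det)
    (hD : ∀ v, D v = (A x)⁻¹ *ᵥ (b' v - A' v *ᵥ ((A x)⁻¹ *ᵥ b x))) :
    HasFDerivAt (fun y => (A y)⁻¹ *ᵥ b y) D x := by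
  have hinv := (hasFDerivAt_inv hx).comp x hA
  refine ((mulVecL 𝕜 n n).hasFDerivAt_of_bilinear hinv hb).congr_fderiv ?_
  ext1 v
  change (A x)⁻¹ *ᵥ b' v + -((A x)⁻¹ * A' v * (A x)⁻¹) *ᵥ b x = D v
  rw [hD, mulVec_sub, neg_mulVec, ← sub_eq_add_neg, mulVec_mulVec, mulVec_mulVec]

end Calculus

namespace StochasticGalerkin

section Flux

variable {𝕜 : Type*} [NontriviallyNormedField 𝕜] {n : Type*} [Fintype n]
  (L : (n → 𝕜) →L[𝕜] (n → 𝕜) →L[𝕜] Matrix n n 𝕜) (a : 𝕜) (e u : n → 𝕜)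

def fluxMatrix (S : n → 𝕜) : Matrix n n 𝕜 := L S S + a • L (e - S) (e - S)

noncomputable def flux [DecidableEq n] (S : n → 𝕜) : n → 𝕜 :=
  (fluxMatrix L a e S)⁻¹ *ᵥ (L S S *ᵥ u)

variable {L}

theorem hasFDerivAt_fluxMatrix (hL : ∀ x y, L x y = L y x) (S : n → 𝕜) :
    HasFDerivAt (fluxMatrix L a e) (-(2 : 𝕜) • L (a • (e - S) - S)) S := by
  have hsub : HasFDerivAt (fun T : n → 𝕜 => e - T) (-ContinuousLinearMap.id 𝕜 (n → 𝕜)) S := by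
    simpa using (hasFDerivAt_id (𝕜 := 𝕜) S).const_sub e
  refine (((hasFDerivAt_id S).bilinear_diag L hL).add
    ((hsub.bilinear_diag L hL).const_smul a)).congr_fderiv ?_
  ext1 v
  change (2 : 𝕜) • L S v + a • (2 : 𝕜) • L (e - S) (-v) = -(2 : 𝕜) • L (a • (e - S) - S) v
  simp only [map_neg, map_sub, map_smul, _root_.sub_apply, _root_.smul_apply]
  module

theorem hasFDerivAt_flux [CompleteSpace 𝕜] [DecidableEq n] (hL : ∀ x y, L x y = L y x)
    (hL_mulVec : ∀ x y z, L x y *ᵥ z = L x z *ᵥ y) (S : n → 𝕜)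
    (hS : IsUnit (fluxMatrix L a e S).det) :
    HasFDerivAt (flux L a e u) (mulVecLin ((2 : 𝕜) • ((fluxMatrix L a e S)⁻¹ *
      (L (a • (e - S) - S) (flux L a e u S) + L S u)))).toContinuousLinearMap S := by
  have hb : HasFDerivAt (fun T => L T T *ᵥ u)
      (((mulVecL 𝕜 n n).flip u).comp ((2 : 𝕜) • L S)) S :=
    ((mulVecL 𝕜 n n).flip u).hasFDerivAt.comp S ((hasFDerivAt_id S).bilinear_diag L hL)
  refine (hasFDerivAt_fluxMatrix a e hL S).matrix_inv_mulVec hb hS fun v => ?_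
  change ((2 : 𝕜) • ((fluxMatrix L a e S)⁻¹ *
      (L (a • (e - S) - S) (flux L a e u S) + L S u))) *ᵥ v =
    (fluxMatrix L a e S)⁻¹ *ᵥ (((2 : 𝕜) • L S v) *ᵥ u
      - (-(2 : 𝕜) • L (a • (e - S) - S) v) *ᵥ flux L a e u S)
  rw [smul_mulVec, ← mulVec_mulVec, add_mulVec, hL_mulVec _ _ v, hL_mulVec S u v]
  simp only [smul_mulVec, neg_smul, neg_mulVec, sub_neg_eq_add, mulVec_smul, mulVec_add]
  module

end Flux

section Tensor

variable {𝕜 : Type*} [NontriviallyNormedField 𝕜] [CompleteSpace 𝕜] {ι : Type*} [Fintype ι]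

def tensorBilin (c : ι → ι → ι → ι → 𝕜) : (ι → 𝕜) →L[𝕜] (ι → 𝕜) →L[𝕜] Matrix ι ι 𝕜 :=
  IsBilinearMap.toContinuousBilinearMap
    (f := fun x y => of fun j k => ∑ h, ∑ i, c h i j k * x h * y i)
    { add_left := fun x₁ x₂ y => by ext; simp [add_mul, mul_add, Finset.sum_add_distrib]
      smul_left := fun r x y => by ext; simp [Finset.mul_sum, mul_left_comm, mul_assoc]
      add_right := fun x y₁ y₂ => by ext; simp [mul_add, Finset.sum_add_distrib]
      smul_right := fun r x y => by ext; simp [Finset.mul_sum, mul_left_comm] }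

variable (c : ι → ι → ι → ι → 𝕜)

@[simp]
theorem tensorBilin_apply (x y : ι → 𝕜) (j k : ι) :
    tensorBilin c x y j k = ∑ h, ∑ i, c h i j k * x h * y i := rfl

theorem tensorBilin_comm (hc : ∀ h i j k, c h i j k = c i h j k) (x y : ι → 𝕜) :
    tensorBilin c x y = tensorBilin c y x := by
  ext j k
  simp only [tensorBilin_apply]
  rw [Finset.sum_comm]
  simp only [hc _ _ j k, mul_right_comm]

theorem tensorBilin_mulVec_comm (hc : ∀ h i j k, c h i j k = c h k j i) (x y z : ι → 𝕜) :
    tensorBilin c x y *ᵥ z = tensorBilin c x z *ᵥ y := by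
  ext j
  simp only [mulVec, dotProduct, tensorBilin_apply, Finset.sum_mul]
  conv_lhs => rw [Finset.sum_comm]
  conv_rhs => rw [Finset.sum_comm]
  refine Finset.sum_congr rfl fun h _ => ?_
  rw [Finset.sum_comm]
  exact Finset.sum_congr rfl fun i _ => Finset.sum_congr rfl fun k _ => by rw [hc]; ring

end Tensor

end StochasticGalerkin

open StochasticGalerkin

theorem stmt_5_general {Ω : Type*} [MeasurableSpace Ω] (Pr : Measure Ω)
    (P : ℕ) (ψ : Fin P → Ω → ℝ)
    (B : (Fin P → ℝ) → (Fin P → ℝ) → Matrix (Fin P) (Fin P) ℝ)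
    (hB : ∀ a b j k, B a b j k =
      ∑ h, ∑ i, (∫ ω, ψ h ω * ψ i ω * ψ j ω * ψ k ω ∂Pr) * a h * b i)
    (a : ℝ) (u : Fin P → ℝ)
    (e₁ : Fin P → ℝ)
    (M : (Fin P → ℝ) → Matrix (Fin P) (Fin P) ℝ)
    (hM : ∀ S, M S = B S S + a • B (e₁ - S) (e₁ - S))
    (F : (Fin P → ℝ) → (Fin P → ℝ))
    (hF : ∀ S, F S = (M S)⁻¹.mulVec ((B S S).mulVec u))
    (S : Fin P → ℝ) (hMS : IsUnit (M S).det) :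
    HasFDerivAt F
      (LinearMap.toContinuousLinearMap
        (Matrix.mulVecLin
          ((2 : ℝ) • ((M S)⁻¹ * (B (a • (e₁ - S) - S) (F S) + B S u))))) S := by
  set c : Fin P → Fin P → Fin P → Fin P → ℝ :=
    fun h i j k => ∫ ω, ψ h ω * ψ i ω * ψ j ω * ψ k ω ∂Pr
  obtain rfl : B = fun x y => tensorBilin c x y := by
    ext x y j k
    exact hB x y j k
  obtain rfl : M = fluxMatrix (tensorBilin c) a e₁ := funext hM
  obtain rfl : F = flux (tensorBilin c) a e₁ u := funext hF
  refine hasFDerivAt_flux a e₁ u (tensorBilin_comm c fun h i j k => ?_)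
    (tensorBilin_mulVec_comm c fun h i j k => ?_) S hMS <;>
  · simp only [c]
    congr 1 with ω
    ring

/-- The Jacobian (Fréchet derivative) of the pseudo-spectral stochastic
Galerkin flux `F S = (B(S,S) + a•B(e₁-S,e₁-S))⁻¹ B(S,S) u`: at any point `S`
where `M S = B(S,S) + a•B(e₁-S,e₁-S)` is invertible, `F` is differentiable
with Jacobian matrix `2 (M S)⁻¹ (B(a•(e₁-S) - S, F S) + B(S, u))`. -/
theorem stmt_5 {Ω : Type*} [MeasurableSpace Ω] (Pr : Measure Ω) [IsProbabilityMeasure Pr]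
    (P : ℕ) (hP : 0 < P) (ψ : Fin P → Ω → ℝ) (hψ : ∀ i, Measurable (ψ i))
    (hint : ∀ h i j k : Fin P,
      Integrable (fun ω => ψ h ω * ψ i ω * ψ j ω * ψ k ω) Pr)
    (B : (Fin P → ℝ) → (Fin P → ℝ) → Matrix (Fin P) (Fin P) ℝ)
    (hB : ∀ a b j k, B a b j k =
      ∑ h, ∑ i, (∫ ω, ψ h ω * ψ i ω * ψ j ω * ψ k ω ∂Pr) * a h * b i)
    (a : ℝ) (ha : 0 < a) (u : Fin P → ℝ)
    (e₁ : Fin P → ℝ) (he₁ : e₁ = fun i : Fin P => if (i : ℕ) = 0 then (1 : ℝ) else 0)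
    (M : (Fin P → ℝ) → Matrix (Fin P) (Fin P) ℝ)
    (hM : ∀ S, M S = B S S + a • B (e₁ - S) (e₁ - S))
    (F : (Fin P → ℝ) → (Fin P → ℝ))
    (hF : ∀ S, F S = (M S)⁻¹.mulVec ((B S S).mulVec u))
    (S : Fin P → ℝ) (hMS : IsUnit (M S).det) :
    HasFDerivAt F
      (LinearMap.toContinuousLinearMap
        (Matrix.mulVecLin
          ((2 : ℝ) • ((M S)⁻¹ * (B (a • (e₁ - S) - S) (F S) + B S u))))) S :=
  stmt_5_general Pr P ψ B hB a u e₁ M hM F hF S hMS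
end
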